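/- Fix C ∈ ℝ and let u : ℝ → ℝ be the solitary wave u_C: a continuous even function with u(0) = √(1+e^{2C}), u(±ℓ_C) = 1 where ℓ_C = ∫_1^{√(1+e^{2C})} dξ/√(2C − log(ξ² − 1)), with 1 < u(x) ≤ √(1+e^{2C}) for |x| < ℓ_C, 0 < u(x) < 1 for |x| > ℓ_C, u(x) → 0 as |x| → ∞, twice continuously differentiable on ℝ \ {−ℓ_C, ℓ_C}, satisfying (1 − u²)u'' = u off the singular points, u'(x)² = 2C − log(u(x)² − 1) for 0 < |x| < ℓ_C, and u'(x)² = −log(1 − u(x)²) for |x| > ℓ_C. Then ∫_ℝ u'(x)² dx = 2∫_0^1 √(−log(1 − ξ²)) dξ + 2∫_1^{√(1+e^{2C})} √(2C − log(ξ² − 1)) dξ. In particular, ∫_ℝ u'(x)² dx ≥ 2∫_0^1 √(−log(1 − ξ²)) dξ, which equals the energy ∫_ℝ (u_cusp')² dx of the cusped soliton; hence the cusped soliton is the lowest energy state in the family. -/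

import Mathlib

/-!
On an interval where a profile `v` is strictly monotone, the first-order invariant
`v'² = F(v)` turns the energy into an integral over the range of `v`: since `|v'| = √(F v)`,
the change of variables `ξ = v x` gives `∫ v'² dx = ∫ |v'| √(F v) dx = ∫ √F dξ`.

By evenness it suffices to integrate over `x > 0`. There the solitary wave decreases from
`√(1 + e^{2C})` to `1` on `(0, ℓ_C)`, because `u'(0) = 0` and the equation gives
`u'' = u / (1 - u²) < 0` where `u > 1`; and it decreases from `1` to `0` on `(ℓ_C, ∞)`, because
there `u'² = -log (1 - u²) > 0`, so `u'` never vanishes and keeps one sign. The cusped soliton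
consists of such a tail on each side of the origin, so its energy is the tail contribution alone,
and the core contributes a nonnegative amount.
-/

open MeasureTheory Filter Set Real Topology

theorem intervalIntegrable_sqrt_sub_log_sq_sub_one (c a b : ℝ) :
    IntervalIntegrable (fun ξ => √(c - log (ξ ^ 2 - 1))) volume a b := by
  have hlog : IntervalIntegrable (fun ξ : ℝ => c - log (ξ ^ 2 - 1)) volume a b :=
    intervalIntegrable_const.sub <| MeromorphicOn.intervalIntegrable_log
      (f := fun ξ : ℝ => ξ ^ 2 - 1) (AnalyticOnNhd.meromorphicOn fun _ _ => by fun_prop)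
  refine (hlog.norm.add (intervalIntegrable_const (c := 1))).mono_fun'
    (continuous_sqrt.comp_aestronglyMeasurable hlog.def'.aestronglyMeasurable)
    (ae_of_all _ fun ξ => ?_)
  simp only [norm_of_nonneg (sqrt_nonneg _), sqrt_le_iff, norm_eq_abs]
  constructor <;> nlinarith [abs_nonneg (c - log (ξ ^ 2 - 1)), le_abs_self (c - log (ξ ^ 2 - 1))]

-- `Real.log` is even, so `log (1 - ξ²) = log (ξ² - 1)`.
theorem intervalIntegrable_sqrt_neg_log_one_sub_sq (a b : ℝ) :
    IntervalIntegrable (fun ξ => √(-log (1 - ξ ^ 2))) volume a b := by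
  simpa [← log_neg_eq_log (1 - _)] using intervalIntegrable_sqrt_sub_log_sq_sub_one 0 a b

section ChangeOfVariables

variable {v F : ℝ → ℝ} {s : Set ℝ}

theorem integrableOn_deriv_sq_iff_of_injOn (hs : MeasurableSet s)
    (hv : ∀ x ∈ s, HasDerivWithinAt v (deriv v x) s x) (hinj : InjOn v s)
    (hF : ∀ x ∈ s, deriv v x ^ 2 = F (v x)) :
    IntegrableOn (fun x => deriv v x ^ 2) s ↔ IntegrableOn (fun ξ => √(F ξ)) (v '' s) := by
  rw [integrableOn_image_iff_integrableOn_abs_deriv_smul hs hv hinj]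
  refine integrableOn_congr_fun (fun x hx => ?_) hs
  rw [smul_eq_mul, ← hF x hx, sqrt_sq_eq_abs, abs_mul_abs_self, sq]

theorem setIntegral_deriv_sq_eq_of_injOn (hs : MeasurableSet s)
    (hv : ∀ x ∈ s, HasDerivWithinAt v (deriv v x) s x) (hinj : InjOn v s)
    (hF : ∀ x ∈ s, deriv v x ^ 2 = F (v x)) :
    ∫ x in s, deriv v x ^ 2 = ∫ ξ in v '' s, √(F ξ) := by
  rw [integral_image_eq_integral_abs_deriv_smul hs hv hinj]
  refine setIntegral_congr_fun hs (fun x hx => ?_)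
  rw [smul_eq_mul, ← hF x hx, sqrt_sq_eq_abs, abs_mul_abs_self, sq]

theorem integrableOn_deriv_sq_and_integral_eq_of_image_eq_Ioo (hs : MeasurableSet s)
    (hv : ∀ x ∈ s, HasDerivWithinAt v (deriv v x) s x) (hinj : InjOn v s)
    (hF : ∀ x ∈ s, deriv v x ^ 2 = F (v x)) {p q : ℝ} (hpq : p ≤ q) (himage : v '' s = Ioo p q)
    (hFint : IntervalIntegrable (fun ξ => √(F ξ)) volume p q) :
    IntegrableOn (fun x => deriv v x ^ 2) s ∧
      ∫ x in s, deriv v x ^ 2 = ∫ ξ in p..q, √(F ξ) := by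
  refine ⟨(integrableOn_deriv_sq_iff_of_injOn hs hv hinj hF).2 ?_, ?_⟩
  · rw [himage]
    exact (intervalIntegrable_iff_integrableOn_Ioo_of_le hpq).1 hFint
  · rw [setIntegral_deriv_sq_eq_of_injOn hs hv hinj hF, himage, intervalIntegral.integral_of_le hpq,
      integral_Ioc_eq_integral_Ioo]

end ChangeOfVariables

theorem strictAntiOn_of_deriv_ne_zero {D : Set ℝ} (hD : Convex ℝ D) {f : ℝ → ℝ}
    (hf : ContinuousOn f D) (hf' : DifferentiableOn ℝ f (interior D))
    (hne : ∀ x ∈ interior D, deriv f x ≠ 0) {x y : ℝ} (hx : x ∈ D) (hy : y ∈ D) (hxy : x < y)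
    (hfxy : f y < f x) : StrictAntiOn f D := by
  have hderiv : ∀ z ∈ interior D, HasDerivWithinAt f (deriv f z) (interior D) z := fun z hz =>
    ((hf'.differentiableAt (isOpen_interior.mem_nhds hz)).hasDerivAt).hasDerivWithinAt
  rcases hasDerivWithinAt_forall_lt_or_forall_gt_of_forall_ne hD.interior hderiv hne with
    hneg | hpos
  · exact strictAntiOn_of_deriv_neg hD hf hneg
  · exact absurd (strictMonoOn_of_deriv_pos hD hf hpos hx hy hxy) hfxy.not_gt

theorem ContinuousOn.image_Ioi_of_strictAntiOn_of_tendsto {α δ : Type*}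
    [ConditionallyCompleteLinearOrder α] [TopologicalSpace α] [OrderTopology α]
    [DenselyOrdered α] [NoMaxOrder α] [LinearOrder δ] [TopologicalSpace δ] [OrderTopology δ]
    {f : α → δ} {a : α} {l : δ}
    (hf : ContinuousOn f (Ici a)) (hanti : StrictAntiOn f (Ici a))
    (hlim : Tendsto f atTop (𝓝 l)) : f '' Ioi a = Ioo l (f a) := by
  refine subset_antisymm ?_ ?_
  · rintro _ ⟨x, hx, rfl⟩
    obtain ⟨y, hxy⟩ := exists_gt x
    have hx' : x ∈ Ici a := mem_Ici.2 (le_of_lt hx)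
    have hy : y ∈ Ici a := mem_Ici.2 (le_of_lt (lt_trans hx hxy))
    have hl : l ≤ f y := le_of_tendsto hlim <| by
      filter_upwards [eventually_ge_atTop y] with z hz
      exact hanti.antitoneOn hy (mem_Ici.2 (le_trans hy hz)) hz
    exact ⟨hl.trans_lt (hanti hx' hy hxy), hanti self_mem_Ici hx' hx⟩
  · rintro ξ ⟨hlξ, hξa⟩
    obtain ⟨b, hb⟩ := (hlim.eventually (gt_mem_nhds hlξ)).and (eventually_ge_atTop a) |>.exists
    obtain ⟨x, hx, hfx⟩ := intermediate_value_Ioo' hb.2 (hf.mono Icc_subset_Ici_self) ⟨hb.1, hξa⟩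
    exact ⟨x, hx.1, hfx⟩

theorem Function.Even.deriv_neg {f : ℝ → ℝ} (hf : f.Even) (x : ℝ) :
    deriv f (-x) = -deriv f x := by
  rw [← neg_neg (deriv f (-x)), ← deriv_comp_neg, funext hf]

theorem Function.Even.deriv_zero {f : ℝ → ℝ} (hf : f.Even) : deriv f 0 = 0 := by
  have := hf.deriv_neg 0
  rw [neg_zero] at this
  linarith

theorem Function.Even.integral_eq_two_mul_integral_Ioi {f : ℝ → ℝ} (hf : f.Even) :
    ∫ x, f x = 2 * ∫ x in Ioi 0, f x := by
  rw [← integral_comp_abs]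
  congr 1 with x
  rcases le_total 0 x with h | h
  · rw [abs_of_nonneg h]
  · rw [abs_of_nonpos h, hf]

theorem Function.Even.integral_deriv_sq_eq_two_mul {f : ℝ → ℝ} (hf : f.Even) :
    ∫ x, deriv f x ^ 2 = 2 * ∫ x in Ioi 0, deriv f x ^ 2 :=
  Function.Even.integral_eq_two_mul_integral_Ioi fun x => by rw [hf.deriv_neg, neg_sq]

theorem intervalIntegrable_deriv_sq_and_integral_eq_of_deriv_neg {v F : ℝ → ℝ} {a b : ℝ}
    (hab : a ≤ b) (hv : ContinuousOn v (Icc a b)) (hd : DifferentiableOn ℝ v (Ioo a b))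
    (hneg : ∀ x ∈ Ioo a b, deriv v x < 0) (hF : ∀ x ∈ Ioo a b, deriv v x ^ 2 = F (v x))
    (hFint : IntervalIntegrable (fun ξ => √(F ξ)) volume (v b) (v a)) :
    IntervalIntegrable (fun x => deriv v x ^ 2) volume a b ∧
      ∫ x in a..b, deriv v x ^ 2 = ∫ ξ in v b..v a, √(F ξ) := by
  have hanti : StrictAntiOn v (Icc a b) :=
    strictAntiOn_of_deriv_neg (convex_Icc a b) hv (by rwa [interior_Icc])
  obtain ⟨hint, heq⟩ := integrableOn_deriv_sq_and_integral_eq_of_image_eq_Ioo measurableSet_Ioo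
    (fun x hx => (hd.differentiableAt (isOpen_Ioo.mem_nhds hx)).hasDerivAt.hasDerivWithinAt)
    (hanti.injOn.mono Ioo_subset_Icc_self) hF
    (hanti.antitoneOn (left_mem_Icc.2 hab) (right_mem_Icc.2 hab) hab)
    (hv.image_Ioo_of_strictAntiOn hab hanti) hFint
  rw [intervalIntegrable_iff_integrableOn_Ioo_of_le hab, intervalIntegral.integral_of_le hab,
    integral_Ioc_eq_integral_Ioo]
  exact ⟨hint, heq⟩

theorem deriv_neg_of_even_of_ode {v : ℝ → ℝ} {b : ℝ} (heven : v.Even)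
    (hsmooth : ContDiffOn ℝ 2 v (Ioo (-b) b))
    (hode : ∀ x ∈ Ioo 0 b, (1 - v x ^ 2) * deriv (deriv v) x = v x)
    (hgt : ∀ x ∈ Ioo 0 b, 1 < v x) : ∀ x ∈ Ioo 0 b, deriv v x < 0 := by
  intro x hx
  have hb : 0 < b := hx.1.trans hx.2
  have hcont : ContinuousOn (deriv v) (Ico 0 b) :=
    (hsmooth.continuousOn_deriv_of_isOpen isOpen_Ioo one_le_two).mono
      fun y hy => ⟨by linarith [hy.1], hy.2⟩
  have hanti : StrictAntiOn (deriv v) (Ico 0 b) := by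
    refine strictAntiOn_of_deriv_neg (convex_Ico 0 b) hcont fun y hy => ?_
    rw [interior_Ico] at hy
    have hvy := hgt y hy
    exact neg_of_mul_pos_right (a := 1 - v y ^ 2) (by linarith [hode y hy]) (by nlinarith)
  simpa [heven.deriv_zero] using hanti ⟨le_rfl, hb⟩ ⟨hx.1.le, hx.2⟩ hx.1

theorem intervalIntegrable_deriv_sq_and_integral_eq_of_even_of_ode {v : ℝ → ℝ} {b c : ℝ}
    (hb : 0 ≤ b) (hv : Continuous v) (heven : v.Even) (hsmooth : ContDiffOn ℝ 2 v (Ioo (-b) b))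
    (hode : ∀ x ∈ Ioo 0 b, (1 - v x ^ 2) * deriv (deriv v) x = v x)
    (hgt : ∀ x ∈ Ioo 0 b, 1 < v x) (hinv : ∀ x ∈ Ioo 0 b, deriv v x ^ 2 = c - log (v x ^ 2 - 1)) :
    IntervalIntegrable (fun x => deriv v x ^ 2) volume 0 b ∧
      ∫ x in (0 : ℝ)..b, deriv v x ^ 2 = ∫ ξ in v b..v 0, √(c - log (ξ ^ 2 - 1)) :=
  intervalIntegrable_deriv_sq_and_integral_eq_of_deriv_neg hb hv.continuousOn
    ((hsmooth.differentiableOn two_ne_zero).mono (Ioo_subset_Ioo_left (by linarith)))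
    (deriv_neg_of_even_of_ode heven hsmooth hode hgt) hinv
    (intervalIntegrable_sqrt_sub_log_sq_sub_one c _ _)

theorem integrableOn_Ioi_deriv_sq_and_integral_eq_of_neg_log {v : ℝ → ℝ} {a : ℝ}
    (hv : Continuous v) (hva : v a = 1) (hd : DifferentiableOn ℝ v (Ioi a))
    (hr : ∀ x ∈ Ioi a, 0 < v x ∧ v x < 1)
    (hinv : ∀ x ∈ Ioi a, deriv v x ^ 2 = -log (1 - v x ^ 2)) (hdec : Tendsto v atTop (𝓝 0)) :
    IntegrableOn (fun x => deriv v x ^ 2) (Ioi a) ∧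
      ∫ x in Ioi a, deriv v x ^ 2 = ∫ ξ in (0 : ℝ)..1, √(-log (1 - ξ ^ 2)) := by
  have hne : ∀ x ∈ Ioi a, deriv v x ≠ 0 := by
    intro x hx hzero
    obtain ⟨hpos, hlt⟩ := hr x hx
    have hlog : log (1 - v x ^ 2) < 0 := log_neg (by nlinarith) (by nlinarith)
    have := hinv x hx
    rw [hzero] at this
    linarith
  have ha1 : a < a + 1 := lt_add_one a
  have hanti : StrictAntiOn v (Ici a) :=
    strictAntiOn_of_deriv_ne_zero (convex_Ici a) hv.continuousOn (by rwa [interior_Ici])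
      (by rwa [interior_Ici]) self_mem_Ici (mem_Ici.2 ha1.le) ha1 (hva ▸ (hr _ ha1).2)
  have himage : v '' Ioi a = Ioo 0 1 :=
    hva ▸ hv.continuousOn.image_Ioi_of_strictAntiOn_of_tendsto hanti hdec
  exact integrableOn_deriv_sq_and_integral_eq_of_image_eq_Ioo measurableSet_Ioi
    (fun x hx => (hd.differentiableAt (isOpen_Ioi.mem_nhds hx)).hasDerivAt.hasDerivWithinAt)
    (hanti.injOn.mono Ioi_subset_Ici_self) hinv zero_le_one himage
    (intervalIntegrable_sqrt_neg_log_one_sub_sq 0 1)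

theorem energy_of_family_and_cusped_is_minimum_general
    (C lC : ℝ)
    (u : ℝ → ℝ)
    (hcont : Continuous u)
    (heven : ∀ x : ℝ, u (-x) = u x)
    (h0 : u 0 = Real.sqrt (1 + Real.exp (2 * C)))
    (hl : u lC = 1)
    (hin : ∀ x : ℝ, |x| < lC → 1 < u x ∧ u x ≤ Real.sqrt (1 + Real.exp (2 * C)))
    (hout : ∀ x : ℝ, lC < |x| → 0 < u x ∧ u x < 1)
    (hdecay : Tendsto u (cocompact ℝ) (nhds 0))
    (hsmooth : ContDiffOn ℝ 2 u ({-lC, lC} : Set ℝ)ᶜ)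
    (heq : ∀ x : ℝ, x ∉ ({-lC, lC} : Set ℝ) → (1 - u x ^ 2) * deriv (deriv u) x = u x)
    (hinvin : ∀ x : ℝ, 0 < |x| → |x| < lC →
      (deriv u x) ^ 2 = 2 * C - Real.log (u x ^ 2 - 1))
    (hinvout : ∀ x : ℝ, lC < |x| → (deriv u x) ^ 2 = -Real.log (1 - u x ^ 2))
    (ucusp : ℝ → ℝ)
    (hccont : Continuous ucusp)
    (hceven : ∀ x : ℝ, ucusp (-x) = ucusp x)
    (hc0 : ucusp 0 = 1)
    (hcrange : ∀ x : ℝ, x ≠ 0 → 0 < ucusp x ∧ ucusp x < 1)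
    (hcdecay : Tendsto ucusp (cocompact ℝ) (nhds 0))
    (hcsmooth : ContDiffOn ℝ 2 ucusp {(0 : ℝ)}ᶜ)
    (hcinv : ∀ x : ℝ, x ≠ 0 → (deriv ucusp x) ^ 2 = -Real.log (1 - ucusp x ^ 2)) :
    (∫ x : ℝ, (deriv u x) ^ 2) =
        2 * (∫ ξ in (0 : ℝ)..1, Real.sqrt (-Real.log (1 - ξ ^ 2))) +
          2 * (∫ ξ in (1 : ℝ)..Real.sqrt (1 + Real.exp (2 * C)),
            Real.sqrt (2 * C - Real.log (ξ ^ 2 - 1))) ∧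
    (∫ x : ℝ, (deriv ucusp x) ^ 2) =
        2 * (∫ ξ in (0 : ℝ)..1, Real.sqrt (-Real.log (1 - ξ ^ 2))) ∧
    (∫ x : ℝ, (deriv ucusp x) ^ 2) ≤ ∫ x : ℝ, (deriv u x) ^ 2 := by
  have hM : 1 < √(1 + exp (2 * C)) := by
    rw [lt_sqrt zero_le_one]
    linarith [exp_pos (2 * C)]
  have hlC : 0 < lC := by
    by_contra! hlC
    rcases hlC.lt_or_eq with hneg | rfl
    · linarith [(hout lC (by rw [abs_of_neg hneg]; linarith)).2]
    · linarith [h0 ▸ hl]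
  have hreg : Ioo (-lC) lC ∪ Ioi lC ⊆ ({-lC, lC} : Set ℝ)ᶜ := by
    rintro x (⟨h1, h2⟩ | h) (rfl | rfl) <;> simp_all [mem_Ioi]
    linarith
  have habs {x : ℝ} (hx : x ∈ Ioo 0 lC) : 0 < |x| ∧ |x| < lC := by
    rw [abs_of_pos hx.1]
    exact hx
  obtain ⟨hcoreInt, hcore⟩ := intervalIntegrable_deriv_sq_and_integral_eq_of_even_of_ode hlC.le
    hcont heven (hsmooth.mono (subset_union_left.trans hreg))
    (fun x hx => heq x (hreg (.inl ⟨by linarith [hx.1], hx.2⟩)))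
    (fun x hx => (hin x (habs hx).2).1) (fun x hx => hinvin x (habs hx).1 (habs hx).2)
  obtain ⟨htailInt, htail⟩ := integrableOn_Ioi_deriv_sq_and_integral_eq_of_neg_log hcont hl
    ((hsmooth.differentiableOn two_ne_zero).mono (subset_union_right.trans hreg))
    (fun x hx => hout x (hx.trans_le (le_abs_self x)))
    (fun x hx => hinvout x (hx.trans_le (le_abs_self x))) (hdecay.mono_left atTop_le_cocompact)
  obtain ⟨-, hcusp⟩ := integrableOn_Ioi_deriv_sq_and_integral_eq_of_neg_log hccont hc0
    ((hcsmooth.differentiableOn two_ne_zero).mono fun x hx => ne_of_gt hx)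
    (fun x hx => hcrange x (ne_of_gt hx)) (fun x hx => hcinv x (ne_of_gt hx))
    (hcdecay.mono_left atTop_le_cocompact)
  have hu : ∫ x, deriv u x ^ 2 = 2 * (∫ ξ in (0 : ℝ)..1, √(-log (1 - ξ ^ 2))) +
      2 * ∫ ξ in (1 : ℝ)..√(1 + exp (2 * C)), √(2 * C - log (ξ ^ 2 - 1)) := by
    rw [Function.Even.integral_deriv_sq_eq_two_mul heven,
      ← intervalIntegral.integral_interval_add_Ioi' hcoreInt htailInt, hcore, htail, hl, h0]
    ring
  have hucusp : ∫ x, deriv ucusp x ^ 2 = 2 * ∫ ξ in (0 : ℝ)..1, √(-log (1 - ξ ^ 2)) := by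
    rw [Function.Even.integral_deriv_sq_eq_two_mul hceven, hcusp]
  refine ⟨hu, hucusp, ?_⟩
  rw [hu, hucusp]
  exact le_add_of_nonneg_right <| mul_nonneg zero_le_two <|
    intervalIntegral.integral_nonneg hM.le fun _ _ => sqrt_nonneg _

/-- energy of the member u_C of the family of solitary waves:
∫_ℝ u'² dx = 2∫_0^1 √(−log(1−ξ²)) dξ + 2∫_1^{√(1+e^{2C})} √(2C − log(ξ²−1)) dξ.
In particular the energy is ≥ 2∫_0^1 √(−log(1−ξ²)) dξ, which equals the energy
of the cusped soliton; hence the cusped soliton is the lowest energy state. -/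
theorem energy_of_family_and_cusped_is_minimum
    (C lC : ℝ)
    (hlC : lC = ∫ ξ in (1 : ℝ)..Real.sqrt (1 + Real.exp (2 * C)),
      1 / Real.sqrt (2 * C - Real.log (ξ ^ 2 - 1)))
    (u : ℝ → ℝ)
    (hcont : Continuous u)
    (heven : ∀ x : ℝ, u (-x) = u x)
    (h0 : u 0 = Real.sqrt (1 + Real.exp (2 * C)))
    (hl : u lC = 1) (hml : u (-lC) = 1)
    (hin : ∀ x : ℝ, |x| < lC → 1 < u x ∧ u x ≤ Real.sqrt (1 + Real.exp (2 * C)))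
    (hout : ∀ x : ℝ, lC < |x| → 0 < u x ∧ u x < 1)
    (hdecay : Tendsto u (cocompact ℝ) (nhds 0))
    (hsmooth : ContDiffOn ℝ 2 u ({-lC, lC} : Set ℝ)ᶜ)
    (heq : ∀ x : ℝ, x ∉ ({-lC, lC} : Set ℝ) → (1 - u x ^ 2) * deriv (deriv u) x = u x)
    (hinvin : ∀ x : ℝ, 0 < |x| → |x| < lC →
      (deriv u x) ^ 2 = 2 * C - Real.log (u x ^ 2 - 1))
    (hinvout : ∀ x : ℝ, lC < |x| → (deriv u x) ^ 2 = -Real.log (1 - u x ^ 2))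
    (ucusp : ℝ → ℝ)
    (hccont : Continuous ucusp)
    (hceven : ∀ x : ℝ, ucusp (-x) = ucusp x)
    (hc0 : ucusp 0 = 1)
    (hcrange : ∀ x : ℝ, x ≠ 0 → 0 < ucusp x ∧ ucusp x < 1)
    (hcdecay : Tendsto ucusp (cocompact ℝ) (nhds 0))
    (hcsmooth : ContDiffOn ℝ 2 ucusp {(0 : ℝ)}ᶜ)
    (hceq : ∀ x : ℝ, x ≠ 0 → (1 - ucusp x ^ 2) * deriv (deriv ucusp) x = ucusp x)
    (hcinv : ∀ x : ℝ, x ≠ 0 → (deriv ucusp x) ^ 2 = -Real.log (1 - ucusp x ^ 2)) :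
    (∫ x : ℝ, (deriv u x) ^ 2) =
        2 * (∫ ξ in (0 : ℝ)..1, Real.sqrt (-Real.log (1 - ξ ^ 2))) +
          2 * (∫ ξ in (1 : ℝ)..Real.sqrt (1 + Real.exp (2 * C)),
            Real.sqrt (2 * C - Real.log (ξ ^ 2 - 1))) ∧
    (∫ x : ℝ, (deriv ucusp x) ^ 2) =
        2 * (∫ ξ in (0 : ℝ)..1, Real.sqrt (-Real.log (1 - ξ ^ 2))) ∧
    (∫ x : ℝ, (deriv ucusp x) ^ 2) ≤ ∫ x : ℝ, (deriv u x) ^ 2 :=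
  energy_of_family_and_cusped_is_minimum_general C lC u hcont heven h0 hl hin hout hdecay hsmooth
    heq hinvin hinvout ucusp hccont hceven hc0 hcrange hcdecay hcsmooth hcinv
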